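/- arXiv:1607.04395 — 4 statements merged into one kernel-verified Lean document; each statement's English description precedes it below -/
import Mathlib

section
/- Let a0,c0,α0,β0,a1,c1,α1,β1 be positive reals with c0 > a0, a1 > c1, a1 > a0. Set R = (β0 α1)/(α0 β1), A = (a1−a0)(R−1), B = (2a0−c0−a1)R + (c1−a0), C = (c0−a0)R. Let ᾱ be the root of the affine function g(u) = ((β1/α1)(1 − c1/a1) − (β0/α0)(1 − c0/a0))u + (β0/α0)(1 − c0/a0), i.e. the unique ᾱ with (a0 a1 − c1 a0 − R a1 a0 + R a1 c0)·ᾱ + R a1 (a0 − c0) = 0. If a := (β1/α1)·c1·a0 − (β0/α0)·c0·a1 < 0, then A ᾱ² + B ᾱ + C < 0. -/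
/-!
Writing the defining equation of `ᾱ` as `D ᾱ = N` with `D = a0 (a1 - c1) + R a1 (c0 - a0)` and
`N = R a1 (c0 - a0)`, one has
`D² T(ᾱ) = T(N, D)` for the homogenised `T`, and `T(N, D)` factors as
`(a1 - c1) · R (c0 - a0) · (a1 - a0) · (c1 a0 - R c0 a1)`. The first three factors are positive, and
the last one is `a / (β1 / α1) < 0`.
-/

lemma quadratic_mul_sq_of_mul_eq {A B C D N x : ℝ} (hx : D * x = N) :
    (A * x ^ 2 + B * x + C) * D ^ 2 = A * N ^ 2 + B * N * D + C * D ^ 2 := by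
  linear_combination (A * (D * x + N) + B * D) * hx

lemma quadratic_neg_of_mul_eq {A B C D N x : ℝ} (hx : D * x = N)
    (h : A * N ^ 2 + B * N * D + C * D ^ 2 < 0) : A * x ^ 2 + B * x + C < 0 := by
  rw [← quadratic_mul_sq_of_mul_eq hx] at h
  exact neg_of_mul_neg_left h (sq_nonneg D)

lemma homogenised_quadratic_factor (a0 c0 a1 c1 R : ℝ) :
    (a1 - a0) * (R - 1) * (R * a1 * (c0 - a0)) ^ 2
      + ((2 * a0 - c0 - a1) * R + (c1 - a0)) * (R * a1 * (c0 - a0))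
        * (a0 * (a1 - c1) + R * a1 * (c0 - a0))
      + (c0 - a0) * R * (a0 * (a1 - c1) + R * a1 * (c0 - a0)) ^ 2
      = (a1 - c1) * (R * (c0 - a0)) * (a1 - a0) * (c1 * a0 - R * c0 * a1) := by
  ring

lemma ratio_mul_sub_eq {α0 β0 α1 β1 : ℝ} (hα0 : α0 ≠ 0) (hα1 : α1 ≠ 0) (hβ1 : β1 ≠ 0)
    (u v : ℝ) :
    β1 / α1 * u - β0 / α0 * v = β1 / α1 * (u - β0 * α1 / (α0 * β1) * v) := by
  field_simp

theorem stmt4_general (a0 c0 α0 β0 a1 c1 α1 β1 : ℝ)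
    (hα0 : 0 < α0) (hβ0 : 0 < β0)
    (hα1 : 0 < α1) (hβ1 : 0 < β1)
    (h0 : c0 > a0) (h1 : a1 > c1) (h01 : a1 > a0)
    (R A B C : ℝ)
    (hR : R = (β0 * α1) / (α0 * β1))
    (hA : A = (a1 - a0) * (R - 1))
    (hB : B = (2 * a0 - c0 - a1) * R + (c1 - a0))
    (hC : C = (c0 - a0) * R)
    (ab : ℝ)
    (hab : (a0 * a1 - c1 * a0 - R * a1 * a0 + R * a1 * c0) * ab + R * a1 * (a0 - c0) = 0)
    (ha : β1 / α1 * c1 * a0 - β0 / α0 * c0 * a1 < 0) :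
    A * ab ^ 2 + B * ab + C < 0 := by
  have hR0 : 0 < R := hR ▸ by positivity
  have hneg : c1 * a0 - R * c0 * a1 < 0 := by
    rw [mul_assoc, mul_assoc, ratio_mul_sub_eq hα0.ne' hα1.ne' hβ1.ne', ← hR] at ha
    exact neg_of_mul_neg_right (by simpa only [mul_assoc] using ha) (by positivity)
  refine quadratic_neg_of_mul_eq (D := a0 * (a1 - c1) + R * a1 * (c0 - a0))
    (N := R * a1 * (c0 - a0)) (by linear_combination hab) ?_
  rw [hA, hB, hC, homogenised_quadratic_factor]
  exact mul_neg_of_pos_of_neg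
    (mul_pos (mul_pos (sub_pos.2 h1) (mul_pos hR0 (sub_pos.2 h0))) (sub_pos.2 h01)) hneg

theorem stmt4 (a0 c0 α0 β0 a1 c1 α1 β1 : ℝ)
    (ha0 : 0 < a0) (hc0 : 0 < c0) (hα0 : 0 < α0) (hβ0 : 0 < β0)
    (ha1 : 0 < a1) (hc1 : 0 < c1) (hα1 : 0 < α1) (hβ1 : 0 < β1)
    (h0 : c0 > a0) (h1 : a1 > c1) (h01 : a1 > a0)
    (R A B C : ℝ)
    (hR : R = (β0 * α1) / (α0 * β1))
    (hA : A = (a1 - a0) * (R - 1))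
    (hB : B = (2 * a0 - c0 - a1) * R + (c1 - a0))
    (hC : C = (c0 - a0) * R)
    (ab : ℝ)
    (hab : (a0 * a1 - c1 * a0 - R * a1 * a0 + R * a1 * c0) * ab + R * a1 * (a0 - c0) = 0)
    (ha : β1 / α1 * c1 * a0 - β0 / α0 * c0 * a1 < 0) :
    A * ab ^ 2 + B * ab + C < 0 :=
  stmt4_general a0 c0 α0 β0 a1 c1 α1 β1 hα0 hβ0 hα1 hβ1 h0 h1 h01 R A B C hR hA hB hC ab hab ha
end

section
/- Under the hypotheses of the previous statement, assume additionally that for each v > 0, u ↦ Λ(u,v) is concave on (0,1), and that Λ(u,v) > 0 for all u ∈ (ᾱ, 1) and v > 0. Then the zero-crossing function v_y is strictly decreasing on (α, ᾱ). -/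
open Set

theorem ConcaveOn.pos_of_mem_openSegment {E : Type*} [AddCommGroup E] [Module ℝ E] {s : Set E}
    {f : E → ℝ} (hf : ConcaveOn ℝ s f) {x y z : E} (hx : x ∈ s) (hz : z ∈ s)
    (hy : y ∈ openSegment ℝ x z) (hfx : 0 ≤ f x) (hfz : 0 < f z) : 0 < f y := by
  obtain ⟨a, b, ha, hb, hab, rfl⟩ := hy
  calc 0 < a • f x + b • f z := add_pos_of_nonneg_of_pos (mul_nonneg ha.le hfx) (mul_pos hb hfz)
    _ ≤ f (a • x + b • z) := hf.2 hx hz ha.le hb.le hab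

theorem stmt9_general (Λ : ℝ → ℝ → ℝ) (α ab : ℝ)
    (hα : 0 < α) (hab : ab < 1)
    (hmono : ∀ u ∈ Ioo (0:ℝ) 1, StrictMonoOn (Λ u) (Ioi (0:ℝ)))
    (hconc : ∀ v ∈ Ioi (0:ℝ), ConcaveOn ℝ (Ioo (0:ℝ) 1) (fun u => Λ u v))
    (hpos : ∀ u ∈ Ioo ab 1, ∀ v ∈ Ioi (0:ℝ), Λ u v > 0)
    (vy : ℝ → ℝ)
    (hvy : ∀ u ∈ Ioo α ab, 0 < vy u ∧ Λ u (vy u) = 0) :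
    StrictAntiOn vy (Ioo α ab) := by
  obtain ⟨δ, hδ_gt, hδ_lt⟩ := exists_between hab
  have hsub : Ioo α ab ⊆ Ioo 0 1 := Ioo_subset_Ioo hα.le hab.le
  intro x hx y hy hxy
  obtain ⟨hvx_pos, hΛx⟩ := hvy x hx
  obtain ⟨hvy_pos, hΛy⟩ := hvy y hy
  have hδ : δ ∈ Ioo (0:ℝ) 1 := ⟨hα.trans (hx.1.trans (hx.2.trans hδ_gt)), hδ_lt⟩
  have hΛy_pos : 0 < Λ y (vy x) :=
    (hconc _ hvx_pos).pos_of_mem_openSegment (hsub hx) hδ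
      (Ioo_subset_openSegment ⟨hxy, hy.2.trans hδ_gt⟩) hΛx.ge (hpos δ ⟨hδ_gt, hδ_lt⟩ _ hvx_pos)
  rw [← hΛy] at hΛy_pos
  exact (hmono y (hsub hy)).lt_iff_lt hvy_pos hvx_pos |>.1 hΛy_pos

theorem stmt9 (Λ : ℝ → ℝ → ℝ) (α ab : ℝ)
    (hα : 0 < α) (hαab : α < ab) (hab : ab < 1)
    (hcont : ContinuousOn (fun p : ℝ × ℝ => Λ p.1 p.2) (Ioo (0:ℝ) 1 ×ˢ Ioi (0:ℝ)))
    (hmono : ∀ u ∈ Ioo (0:ℝ) 1, StrictMonoOn (Λ u) (Ioi (0:ℝ)))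
    (hconc : ∀ v ∈ Ioi (0:ℝ), ConcaveOn ℝ (Ioo (0:ℝ) 1) (fun u => Λ u v))
    (hpos : ∀ u ∈ Ioo ab 1, ∀ v ∈ Ioi (0:ℝ), Λ u v > 0)
    (vy : ℝ → ℝ)
    (hvy : ∀ u ∈ Ioo α ab, 0 < vy u ∧ Λ u (vy u) = 0) :
    StrictAntiOn vy (Ioo α ab) :=
  stmt9_general Λ α ab hα hab hmono hconc hpos vy hvy
end

section
/- Let a0,b0,c0,d0 and a1,b1,c1,d1 be positive with a0 < c0, b0 < d0 (environment 0 of Type 1) and a1 > c1, b1 > d1 (environment 1 of Type 2), and α0,α1,β0,β1 > 0. Then the set Ĩ = { u ∈ [0,1] : T(u) < 0 } (with T(u) = A u² + B u + C, R, A, B, C as usual) is nonempty; in fact Ĩ = (α, 1] for some α ∈ (0,1). -/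
/-!
`T(0) = C > 0` because `a0 < c0` and `R > 0`, while `T(1) = c1 - a1 < 0`. By the intermediate
value theorem `T` has a root `α ∈ (0, 1)`, so `T(u) = (u - α) L(u)` with `L` affine. The signs of
`T(0)` and `T(1)` force `L(0) < 0` and `L(1) < 0`, hence `L < 0` on `[0, 1]`, and there `T(u) < 0`
exactly when `u > α`.
-/

open Set

theorem affine_neg_of_mem_Icc {m k u : ℝ} (h0 : k < 0) (h1 : m + k < 0) (hu : u ∈ Icc (0:ℝ) 1) :
    m * u + k < 0 := by
  rcases le_total 0 m with hm | hm
  · linarith [mul_le_mul_of_nonneg_left hu.2 hm]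
  · linarith [mul_nonpos_of_nonpos_of_nonneg hm hu.1]

theorem exists_setOf_quadratic_neg_eq_Ioc {a b c : ℝ} (h0 : 0 < c) (h1 : a + b + c < 0) :
    ∃ α ∈ Ioo (0:ℝ) 1, {u ∈ Icc (0:ℝ) 1 | a * u ^ 2 + b * u + c < 0} = Ioc α 1 := by
  obtain ⟨α, ⟨hα0, hα1⟩, hroot⟩ : (0:ℝ) ∈ (fun u => a * u ^ 2 + b * u + c) '' Ioo 0 1 :=
    intermediate_value_Ioo' zero_le_one (by fun_prop) ⟨by simpa using h1, by simpa using h0⟩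
  have hfactor : ∀ u, a * u ^ 2 + b * u + c = (u - α) * (a * u + (a * α + b)) := fun u => by
    linear_combination hroot
  have hL0 : a * α + b < 0 := by
    have h : -α * (a * α + b) = c := by linear_combination -hroot
    exact neg_of_mul_pos_right (h ▸ h0) (by linarith)
  have hL1 : a + (a * α + b) < 0 := by
    have h : (1 - α) * (a + (a * α + b)) = a + b + c := by linear_combination -hroot
    exact neg_of_mul_neg_right (h ▸ h1) (by linarith)
  refine ⟨α, ⟨hα0, hα1⟩, ?_⟩
  ext u
  simp only [mem_sep_iff, mem_Ioc, hfactor]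
  constructor
  · rintro ⟨hu, hneg⟩
    exact ⟨sub_pos.1 (pos_of_mul_neg_left hneg (affine_neg_of_mem_Icc hL0 hL1 hu).le), hu.2⟩
  · rintro ⟨hαu, hu1⟩
    have hu : u ∈ Icc (0:ℝ) 1 := ⟨hα0.le.trans hαu.le, hu1⟩
    exact ⟨hu, mul_neg_of_pos_of_neg (sub_pos.2 hαu) (affine_neg_of_mem_Icc hL0 hL1 hu)⟩

theorem stmt12_general (a0 c0 α0 β0 a1 c1 α1 β1 : ℝ)
    (hα0 : 0 < α0) (hβ0 : 0 < β0)
    (hα1 : 0 < α1) (hβ1 : 0 < β1)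
    (hT1a : a0 < c0) (hT2a : a1 > c1)
    (R A B C : ℝ)
    (hR : R = (β0 * α1) / (α0 * β1))
    (hA : A = (a1 - a0) * (R - 1))
    (hB : B = (2 * a0 - c0 - a1) * R + (c1 - a0))
    (hC : C = (c0 - a0) * R)
    (T : ℝ → ℝ) (hT : ∀ u, T u = A * u ^ 2 + B * u + C) :
    ∃ α ∈ Ioo (0:ℝ) 1, {u ∈ Icc (0:ℝ) 1 | T u < 0} = Ioc α 1 := by
  have hRpos : 0 < R := hR ▸ by positivity
  have hC_pos : 0 < C := hC ▸ mul_pos (sub_pos.2 hT1a) hRpos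
  have hT_one : A + B + C < 0 := by
    have hsum : A + B + C = c1 - a1 := by rw [hA, hB, hC]; ring
    linarith
  simpa only [hT] using exists_setOf_quadratic_neg_eq_Ioc hC_pos hT_one

theorem stmt12 (a0 b0 c0 d0 α0 β0 a1 b1 c1 d1 α1 β1 : ℝ)
    (ha0 : 0 < a0) (hb0 : 0 < b0) (hc0 : 0 < c0) (hd0 : 0 < d0)
    (hα0 : 0 < α0) (hβ0 : 0 < β0)
    (ha1 : 0 < a1) (hb1 : 0 < b1) (hc1 : 0 < c1) (hd1 : 0 < d1)
    (hα1 : 0 < α1) (hβ1 : 0 < β1)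
    (hT1a : a0 < c0) (hT1b : b0 < d0) (hT2a : a1 > c1) (hT2b : b1 > d1)
    (R A B C : ℝ)
    (hR : R = (β0 * α1) / (α0 * β1))
    (hA : A = (a1 - a0) * (R - 1))
    (hB : B = (2 * a0 - c0 - a1) * R + (c1 - a0))
    (hC : C = (c0 - a0) * R)
    (T : ℝ → ℝ) (hT : ∀ u, T u = A * u ^ 2 + B * u + C) :
    ∃ α ∈ Ioo (0:ℝ) 1, {u ∈ Icc (0:ℝ) 1 | T u < 0} = Ioc α 1 :=
  stmt12_general a0 c0 α0 β0 a1 c1 α1 β1 hα0 hβ0 hα1 hβ1 hT1a hT2a R A B C hR hA hB hC T hT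
end

section
/- For positive reals a0,a1,c0,c1,α0,α1,β0,β1 with notation R = (β0 α1)/(α0 β1), A = (a1−a0)(R−1), B = (2a0−c0−a1)R + (c1−a0), C = (c0−a0)R: for every s ∈ (0,1), setting α_s = s α1 + (1−s) α0, β_s = s β1 + (1−s) β0, a_s = (s α1 a1 + (1−s) α0 a0)/α_s, c_s = (s β1 c1 + (1−s) β0 c0)/β_s, and u = s α1/α_s, one has c_s − a_s = (A u² + B u + C)/(R(1−u) + u), up to the positive factor; in particular c_s − a_s and A u² + B u + C have the same sign. -/
/-!
Put `u = s α₁ / α_s`. Then `a_s = u a₁ + (1 - u) a₀` is a convex combination with weight `u`, and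
`c_s` is the convex combination of `c₀, c₁` with weight `v = s β₁ / β_s`. The two weights are related
by the Möbius change `v = u / (R (1 - u) + u)`, so `c_s - a_s` is a quadratic in `u` over the positive
denominator `R (1 - u) + u`.
-/

theorem weighted_average_eq_convex_combination {s x₀ x₁ xs : ℝ} (a₀ a₁ : ℝ)
    (hxs : xs = s * x₁ + (1 - s) * x₀) (hxs₀ : xs ≠ 0) :
    (s * x₁ * a₁ + (1 - s) * x₀ * a₀) / xs = s * x₁ / xs * a₁ + (1 - s * x₁ / xs) * a₀ := by
  field_simp
  rw [hxs]
  ring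

theorem moebius_denominator_eq {s α₀ α₁ β₀ β₁ αs βs : ℝ} (hα₀ : α₀ ≠ 0) (hβ₁ : β₁ ≠ 0)
    (hαs : αs = s * α₁ + (1 - s) * α₀) (hβs : βs = s * β₁ + (1 - s) * β₀) (hαs₀ : αs ≠ 0) :
    β₀ * α₁ / (α₀ * β₁) * (1 - s * α₁ / αs) + s * α₁ / αs = α₁ * βs / (β₁ * αs) := by
  field_simp
  rw [hαs, hβs]
  ring

theorem weight_eq_div_moebius_denominator {s α₀ α₁ β₀ β₁ αs βs : ℝ} (hα₀ : α₀ ≠ 0) (hα₁ : α₁ ≠ 0)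
    (hβ₁ : β₁ ≠ 0) (hαs : αs = s * α₁ + (1 - s) * α₀) (hβs : βs = s * β₁ + (1 - s) * β₀)
    (hαs₀ : αs ≠ 0) (hβs₀ : βs ≠ 0) :
    s * β₁ / βs = s * α₁ / αs / (β₀ * α₁ / (α₀ * β₁) * (1 - s * α₁ / αs) + s * α₁ / αs) := by
  rw [moebius_denominator_eq hα₀ hβ₁ hαs hβs hαs₀]
  field_simp

theorem moebius_convex_combination_sub_eq_quadratic_div (R u a₀ a₁ c₀ c₁ : ℝ) (hD : R * (1 - u) + u ≠ 0) :
    u / (R * (1 - u) + u) * c₁ + (1 - u / (R * (1 - u) + u)) * c₀ - (u * a₁ + (1 - u) * a₀) =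
      ((a₁ - a₀) * (R - 1) * u ^ 2 + ((2 * a₀ - c₀ - a₁) * R + (c₁ - a₀)) * u + (c₀ - a₀) * R) /
        (R * (1 - u) + u) := by
  field_simp
  ring

theorem stmt13_general (a0 a1 c0 c1 α0 α1 β0 β1 : ℝ)
    (hα0 : 0 < α0) (hα1 : 0 < α1) (hβ0 : 0 < β0) (hβ1 : 0 < β1)
    (R A B C : ℝ)
    (hR : R = (β0 * α1) / (α0 * β1))
    (hA : A = (a1 - a0) * (R - 1))
    (hB : B = (2 * a0 - c0 - a1) * R + (c1 - a0))
    (hC : C = (c0 - a0) * R)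
    (s : ℝ) (hs : s ∈ Set.Ioo (0:ℝ) 1)
    (αs βs as cs u : ℝ)
    (hαs : αs = s * α1 + (1 - s) * α0)
    (hβs : βs = s * β1 + (1 - s) * β0)
    (has : as = (s * α1 * a1 + (1 - s) * α0 * a0) / αs)
    (hcs : cs = (s * β1 * c1 + (1 - s) * β0 * c0) / βs)
    (hu : u = s * α1 / αs) :
    cs - as = (A * u ^ 2 + B * u + C) / (R * (1 - u) + u) ∧
      (0 < cs - as ↔ 0 < A * u ^ 2 + B * u + C) := by
  obtain ⟨hs0, hs1⟩ := hs
  have hαs_pos : 0 < αs := hαs ▸ add_pos (mul_pos hs0 hα1) (mul_pos (sub_pos.2 hs1) hα0)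
  have hβs_pos : 0 < βs := hβs ▸ add_pos (mul_pos hs0 hβ1) (mul_pos (sub_pos.2 hs1) hβ0)
  have hD : 0 < R * (1 - u) + u := by
    rw [hR, hu, moebius_denominator_eq hα0.ne' hβ1.ne' hαs hβs hαs_pos.ne']
    positivity
  have key : cs - as = (A * u ^ 2 + B * u + C) / (R * (1 - u) + u) := by
    rw [hcs, has, weighted_average_eq_convex_combination c0 c1 hβs hβs_pos.ne',
      weighted_average_eq_convex_combination a0 a1 hαs hαs_pos.ne',
      weight_eq_div_moebius_denominator hα0.ne' hα1.ne' hβ1.ne' hαs hβs hαs_pos.ne' hβs_pos.ne',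
      ← hR, ← hu, moebius_convex_combination_sub_eq_quadratic_div R u a0 a1 c0 c1 hD.ne', hA, hB, hC]
  exact ⟨key, key ▸ div_pos_iff_of_pos_right hD⟩

theorem stmt13 (a0 a1 c0 c1 α0 α1 β0 β1 : ℝ)
    (ha0 : 0 < a0) (ha1 : 0 < a1) (hc0 : 0 < c0) (hc1 : 0 < c1)
    (hα0 : 0 < α0) (hα1 : 0 < α1) (hβ0 : 0 < β0) (hβ1 : 0 < β1)
    (R A B C : ℝ)
    (hR : R = (β0 * α1) / (α0 * β1))
    (hA : A = (a1 - a0) * (R - 1))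
    (hB : B = (2 * a0 - c0 - a1) * R + (c1 - a0))
    (hC : C = (c0 - a0) * R)
    (s : ℝ) (hs : s ∈ Set.Ioo (0:ℝ) 1)
    (αs βs as cs u : ℝ)
    (hαs : αs = s * α1 + (1 - s) * α0)
    (hβs : βs = s * β1 + (1 - s) * β0)
    (has : as = (s * α1 * a1 + (1 - s) * α0 * a0) / αs)
    (hcs : cs = (s * β1 * c1 + (1 - s) * β0 * c0) / βs)
    (hu : u = s * α1 / αs) :
    cs - as = (A * u ^ 2 + B * u + C) / (R * (1 - u) + u) ∧
      (0 < cs - as ↔ 0 < A * u ^ 2 + B * u + C) :=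
  stmt13_general a0 a1 c0 c1 α0 α1 β0 β1 hα0 hα1 hβ0 hβ1 R A B C hR hA hB hC s hs αs βs as cs u hαs
    hβs has hcs hu
end
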